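/- Let n ≥ 4. The number of triples (≤, σ, c) where ≤ is a linear order on an n-element set D, c : D → {Red, Blue} is a proper 2-coloring of consecutive elements of ≤ (consecutive elements get different colors), and σ is a fixed-point-free permutation of D that preserves the coloring (c(σ(x)) = c(x)), has exactly two x with σ(x) < x under ≤, and admits a sub-relation of size n-2 contained in {(x, σ(x)) : x < σ(x)}, is exactly 2 · n!. -/

import Mathlib

/-!
Transporting a structure along the unique order isomorphism with `(Fin n, ≤)` identifies the
models of the theory with pairs of a permutation of `Fin n` and a model on the standard order,
so it suffices to see that `(Fin n, ≤)` carries exactly two models. There the colouring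
alternates, so `σ` preserves parity; being fixed-point free, it moves each point either down
or up by at least two. The two largest points must go down, so they are the only descents and
every other point `i` goes up by at least two; injectivity then forces `σ i = i + 2`, and the
two largest points are sent to `0` and `1` according to parity. Only the colour of `0` is free.
-/

open Equiv Finset Function

theorem exists_equiv_fin_of_isLinearOrder {α : Type*} [Fintype α] {n : ℕ}
    (hα : Fintype.card α = n) (r : α → α → Prop) [IsLinearOrder α r] :
    ∃ e : Fin n ≃ α, ∀ a b, r (e a) (e b) ↔ a ≤ b := by
  let _ : LinearOrder α :=
    { le := r
      le_refl := refl_of r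
      le_trans _ _ _ := trans_of r
      le_antisymm _ _ := antisymm_of r
      le_total := total_of r
      toDecidableLE := Classical.decRel r }
  exact ⟨(monoEquivOfFin α hα).toEquiv, fun _ _ => (monoEquivOfFin α hα).le_iff_le⟩

theorem Equiv.eq_of_le_iff_le {α β : Type*} [LinearOrder β] [WellFoundedLT β] {e e' : α ≃ β}
    (h : ∀ a b, e a ≤ e b ↔ e' a ≤ e' b) : e = e' := by
  let f : β ≃o β := ⟨e.symm.trans e', fun {x y} => by simpa using (h (e.symm x) (e.symm y)).symm⟩
  have hf : f = OrderIso.refl β := Subsingleton.elim _ _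
  ext a
  simpa [f] using (DFunLike.congr_fun hf (e a)).symm

theorem Nat.card_subtype_eq_card_filter {α : Type*} [Fintype α] (p : α → Prop)
    [DecidablePred p] : Nat.card {x // p x} = #{x | p x} := by
  rw [Nat.card_eq_fintype_card, Fintype.card_subtype]

theorem Fin.card_filter_not_val_lt {n m : ℕ} : #{i : Fin n | ¬ (i : ℕ) < m} = n - m := by
  have := card_filter_add_card_filter_not (s := univ) fun i : Fin n => (i : ℕ) < m
  rw [Fin.card_filter_val_lt, card_univ, Fintype.card_fin] at this
  omega

theorem Fin.val_apply_eq_add_of_injective {n k : ℕ} {f : Fin n → Fin n} (hf : Injective f)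
    (hle : ∀ i : Fin n, (i : ℕ) < n - k → (i : ℕ) + k ≤ f i) (i : Fin n) (hi : (i : ℕ) < n - k) :
    (f i : ℕ) = i + k := by
  induction hm : n - i using Nat.strong_induction_on generalizing i with
  | _ m ih =>
  by_contra hne
  have hlt : (i : ℕ) + k < f i := (hle i hi).lt_of_ne (Ne.symm hne)
  let j : Fin n := ⟨f i - k, by omega⟩
  have hj : (f j : ℕ) = j + k := ih (n - j) (by simp [j]; omega) j (by simp [j]; omega) rfl
  have hji : j = i := hf (Fin.ext (by simp [j] at hj ⊢; omega))
  simp [j, Fin.ext_iff] at hji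
  omega

namespace Pred2

/-- An interpretation of the signature: the order, the permutation `σ` and the colouring. -/
abbrev Interp (α γ : Type*) := (α → α → Prop) × Perm α × (α → γ)

variable {α β γ : Type*}

def IsModel (k : ℕ) (t : Interp α γ) : Prop :=
  IsLinearOrder α t.1 ∧
  (∀ x y : α,
    ((t.1 x y ∧ x ≠ y) ∧ ∀ z, ¬ ((t.1 x z ∧ x ≠ z) ∧ (t.1 z y ∧ z ≠ y))) →
    t.2.2 x ≠ t.2.2 y) ∧
  (∀ x, t.2.1 x ≠ x) ∧
  (∀ x, t.2.2 (t.2.1 x) = t.2.2 x) ∧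
  Nat.card {x : α // t.1 (t.2.1 x) x ∧ t.2.1 x ≠ x} = 2 ∧
  k ≤ Nat.card {x : α // t.1 x (t.2.1 x) ∧ x ≠ t.2.1 x}

def Interp.map (e : α ≃ β) (t : Interp α γ) : Interp β γ :=
  (t.1 on e.symm, e.permCongr t.2.1, t.2.2 ∘ e.symm)

@[simp]
theorem Interp.map_symm_map (e : α ≃ β) (t : Interp α γ) : (t.map e).map e.symm = t := by
  ext <;> simp [Interp.map, onFun]

theorem IsModel.map {k : ℕ} {t : Interp α γ} (h : IsModel k t) (e : α ≃ β) :
    IsModel k (t.map e) := by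
  obtain ⟨hlin, hcol, hfix, hpres, hdesc, hasc⟩ := h
  refine ⟨Injective.isLinearOrder_onFun t.1 e.symm.injective, fun x y hxy => hcol _ _ ?_,
    fun x => ?_, fun x => ?_, ?_, ?_⟩
  · simpa [Interp.map, onFun, e.symm.surjective.forall, e.symm.injective.ne_iff] using hxy
  · simpa [Interp.map, e.eq_symm_apply] using hfix (e.symm x)
  · simpa [Interp.map] using hpres (e.symm x)
  · rw [← hdesc]
    exact Nat.card_congr (e.symm.subtypeEquiv fun x => by
      simp [Interp.map, onFun, e.eq_symm_apply])
  · refine hasc.trans_eq (Nat.card_congr (e.subtypeEquiv fun x => ?_))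
    simp [Interp.map, onFun]

theorem isModel_le_iff [LinearOrder α] {k : ℕ} {τ : Perm α} {c : α → γ} :
    IsModel k ((· ≤ ·), τ, c) ↔
      (∀ x y, x ⋖ y → c x ≠ c y) ∧ (∀ x, τ x ≠ x) ∧ (∀ x, c (τ x) = c x) ∧
        Nat.card {x // τ x < x} = 2 ∧ k ≤ Nat.card {x // x < τ x} := by
  simp only [IsModel, ← lt_iff_le_and_ne, CovBy, not_and]
  exact and_iff_right inferInstance

theorem Interp.map_le_injective {n : ℕ} {π π' : Perm (Fin n)}
    {s s' : Perm (Fin n) × (Fin n → γ)}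
    (h : Interp.map π ((· ≤ ·), s.1, s.2) = Interp.map π' ((· ≤ ·), s'.1, s'.2)) :
    π = π' ∧ s = s' := by
  have hπ : π.symm = π'.symm := Equiv.eq_of_le_iff_le fun a b => by
    simpa [Interp.map, onFun] using congrFun (congrFun (congrArg Prod.fst h) a) b
  obtain rfl : π = π' := symm_bijective.injective hπ
  have := congrArg (Interp.map π.symm) h
  simp only [Interp.map_symm_map, Prod.mk.injEq, true_and] at this
  exact ⟨rfl, Prod.ext this.1 this.2⟩

theorem Interp.exists_map_le_eq {n : ℕ} (t : Interp (Fin n) γ) [IsLinearOrder (Fin n) t.1] :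
    ∃ (π : Perm (Fin n)) (s : Perm (Fin n) × (Fin n → γ)),
      Interp.map π ((· ≤ ·), s.1, s.2) = t := by
  obtain ⟨π, hπ⟩ := exists_equiv_fin_of_isLinearOrder (Fintype.card_fin n) t.1
  have hle : (t.map π.symm).1 = (· ≤ ·) := by
    ext a b
    simp [Interp.map, onFun, hπ]
  refine ⟨π, ((t.map π.symm).2.1, (t.map π.symm).2.2), ?_⟩
  simpa [← hle] using t.map_symm_map π.symm

theorem card_isModel {n k : ℕ} :
    Nat.card {t : Interp (Fin n) γ // IsModel k t} =
      n.factorial * Nat.card {s : Perm (Fin n) × (Fin n → γ) // IsModel k ((· ≤ ·), s.1, s.2)} := by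
  let f : Perm (Fin n) × {s : Perm (Fin n) × (Fin n → γ) // IsModel k ((· ≤ ·), s.1, s.2)} →
      {t : Interp (Fin n) γ // IsModel k t} :=
    fun p => ⟨Interp.map p.1 ((· ≤ ·), p.2.1.1, p.2.1.2), p.2.2.map p.1⟩
  have hf : Bijective f := by
    refine ⟨fun ⟨π, s, hs⟩ ⟨π', s', hs'⟩ h => ?_, fun ⟨t, ht⟩ => ?_⟩
    · obtain ⟨rfl, rfl⟩ := Interp.map_le_injective (congrArg Subtype.val h)
      rfl
    · have := ht.1
      obtain ⟨π, s, rfl⟩ := t.exists_map_le_eq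
      exact ⟨(π, ⟨s, by simpa using ht.map π.symm⟩), rfl⟩
  rw [← Nat.card_congr (Equiv.ofBijective f hf), Nat.card_prod, Nat.card_perm, Nat.card_fin]

def stepTwoFun (n : ℕ) (i : Fin n) : Fin n :=
  if h : (i : ℕ) < n - 2 then ⟨i + 2, by omega⟩ else ⟨i % 2, (Nat.mod_le _ _).trans_lt i.isLt⟩

theorem stepTwoFun_val (n : ℕ) (i : Fin n) :
    (stepTwoFun n i : ℕ) = if (i : ℕ) < n - 2 then (i : ℕ) + 2 else i % 2 := by
  simp only [stepTwoFun]
  split_ifs <;> rfl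

theorem stepTwoFun_injective (n : ℕ) : Injective (stepTwoFun n) := by
  intro a b hab
  have h := congrArg Fin.val hab
  rw [stepTwoFun_val, stepTwoFun_val] at h
  have := a.isLt
  have := b.isLt
  ext
  split_ifs at h <;> omega

noncomputable def stepTwo (n : ℕ) : Perm (Fin n) :=
  .ofBijective (stepTwoFun n) (Finite.injective_iff_bijective.mp (stepTwoFun_injective n))

theorem stepTwo_val (n : ℕ) (i : Fin n) :
    (stepTwo n i : ℕ) = if (i : ℕ) < n - 2 then (i : ℕ) + 2 else i % 2 :=
  stepTwoFun_val n i

theorem stepTwo_lt_iff {n : ℕ} (hn : 4 ≤ n) (x : Fin n) : stepTwo n x < x ↔ ¬ (x : ℕ) < n - 2 := by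
  rw [Fin.lt_def, stepTwo_val]
  split_ifs <;> omega

theorem lt_stepTwo_iff {n : ℕ} (x : Fin n) : x < stepTwo n x ↔ (x : ℕ) < n - 2 := by
  rw [Fin.lt_def, stepTwo_val]
  split_ifs <;> omega

theorem eq_stepTwo {n : ℕ} (hn : 2 ≤ n) (τ : Perm (Fin n)) (hfix : ∀ x, τ x ≠ x)
    (hpar : ∀ x, (τ x : ℕ) % 2 = x % 2) (hdesc : #{x | τ x < x} = 2) : τ = stepTwo n := by
  have hstep : ∀ x, τ x < x ∨ (x : ℕ) + 2 ≤ τ x := fun x => by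
    have := hpar x
    have := Fin.val_ne_of_ne (hfix x)
    rw [Fin.lt_def]
    omega
  have htop : ({x | ¬ (x : ℕ) < n - 2} : Finset (Fin n)) ⊆
      ({x | τ x < x} : Finset (Fin n)) := by
    intro x hx
    simp only [mem_filter, mem_univ, true_and] at hx ⊢
    have := (τ x).isLt
    exact (hstep x).resolve_right (by omega)
  have hdesc_eq := eq_of_subset_of_card_le htop (by rw [hdesc, Fin.card_filter_not_val_lt]; omega)
  have hlow : ∀ x : Fin n, (x : ℕ) < n - 2 → (x : ℕ) + 2 ≤ τ x := fun x hx =>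
    (hstep x).resolve_left fun h => by
      have : x ∈ ({x | ¬ (x : ℕ) < n - 2} : Finset (Fin n)) := hdesc_eq ▸ by simpa using h
      simp at this
      omega
  have hshift := Fin.val_apply_eq_add_of_injective τ.injective hlow
  ext x
  rw [stepTwo_val]
  split_ifs with hx
  · exact hshift x hx
  · -- every value `v ≥ 2` is already taken, as `τ (v - 2)`
    have hlt : (τ x : ℕ) < 2 := by
      by_contra! h
      have hy := hshift ⟨τ x - 2, by omega⟩ (by simp; omega)
      have : (⟨τ x - 2, by omega⟩ : Fin n) = x := τ.injective (Fin.ext (by simp at hy ⊢; omega))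
      simp [Fin.ext_iff] at this
      omega
    have := hpar x
    omega

def altColoring {n : ℕ} (b : Bool) (x : Fin n) : Bool := b ^^ decide ((x : ℕ) % 2 = 1)

theorem altColoring_eq_iff {n : ℕ} (b : Bool) (x y : Fin n) :
    altColoring b x = altColoring b y ↔ (x : ℕ) % 2 = y % 2 := by
  simp only [altColoring, Bool.xor_right_inj, decide_eq_decide]
  omega

theorem eq_altColoring_of_covBy {n : ℕ} (h0 : 0 < n) {c : Fin n → Bool}
    (hc : ∀ x y : Fin n, x ⋖ y → c x ≠ c y) : c = altColoring (c ⟨0, h0⟩) := by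
  funext ⟨i, hi⟩
  induction i with
  | zero => simp [altColoring]
  | succ i ih =>
    let j : Fin n := ⟨i, Nat.lt_of_succ_lt hi⟩
    have hne : c j ≠ c ⟨i + 1, hi⟩ := hc _ _ (by simp [j, Fin.covBy_iff])
    have halt : altColoring (c ⟨0, h0⟩) j ≠ altColoring (c ⟨0, h0⟩) ⟨i + 1, hi⟩ := by
      rw [Ne, altColoring_eq_iff]
      change ¬i % 2 = (i + 1) % 2
      omega
    rw [ih j.isLt, ← Bool.not_eq_iff] at hne
    rw [← Bool.not_eq_iff] at halt
    exact hne.symm.trans halt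

theorem isModel_stepTwo {n : ℕ} (hn : 4 ≤ n) (b : Bool) :
    IsModel (n - 2) ((· ≤ ·), stepTwo n, altColoring b) := by
  refine isModel_le_iff.2 ⟨fun x y hxy => ?_, fun x hx => ?_, fun x => ?_, ?_, ?_⟩
  · rw [Fin.covBy_iff, Nat.covBy_iff_add_one_eq] at hxy
    rw [Ne, altColoring_eq_iff]
    omega
  · have hlt := stepTwo_lt_iff hn x
    have hgt := lt_stepTwo_iff x
    rw [hx, lt_self_iff_false, false_iff] at hlt hgt
    exact hlt hgt
  · rw [altColoring_eq_iff, stepTwo_val]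
    split_ifs <;> omega
  · rw [Nat.card_congr (subtypeEquivRight (stepTwo_lt_iff hn)), Nat.card_subtype_eq_card_filter,
      Fin.card_filter_not_val_lt]
    omega
  · rw [Nat.card_congr (subtypeEquivRight lt_stepTwo_iff), Nat.card_subtype_eq_card_filter,
      Fin.card_filter_val_lt]
    omega

theorem IsModel.eq_stepTwo_altColoring {n k : ℕ} (hn : 2 ≤ n) {τ : Perm (Fin n)}
    {c : Fin n → Bool} (h : IsModel k ((· ≤ ·), τ, c)) :
    τ = stepTwo n ∧ c = altColoring (c ⟨0, by omega⟩) := by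
  obtain ⟨hcov, hfix, hpres, hdesc, -⟩ := isModel_le_iff.1 h
  have hc := eq_altColoring_of_covBy (by omega) hcov
  refine ⟨eq_stepTwo hn τ hfix (fun x => ?_) ?_, hc⟩
  · have := hpres x
    rwa [hc, altColoring_eq_iff] at this
  · rwa [Nat.card_subtype_eq_card_filter] at hdesc

theorem card_isModel_le {n : ℕ} (hn : 4 ≤ n) :
    Nat.card {s : Perm (Fin n) × (Fin n → Bool) // IsModel (n - 2) ((· ≤ ·), s.1, s.2)} = 2 := by
  let f : Bool → {s : Perm (Fin n) × (Fin n → Bool) // IsModel (n - 2) ((· ≤ ·), s.1, s.2)} :=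
    fun b => ⟨(stepTwo n, altColoring b), isModel_stepTwo hn b⟩
  have hf : Bijective f := by
    refine ⟨fun b b' h => ?_, fun ⟨⟨τ, c⟩, h⟩ => ?_⟩
    · simpa [f, altColoring] using congrFun (congrArg (·.1.2) h) ⟨0, by omega⟩
    · obtain ⟨hτ, hc⟩ := h.eq_stepTwo_altColoring (by omega)
      exact ⟨_, Subtype.ext (Prod.ext hτ.symm hc.symm)⟩
  rw [← Nat.card_congr (Equiv.ofBijective f hf), Nat.card_eq_fintype_card, Fintype.card_bool]

end Pred2

/-- The predecessor-of-predecessor theory has exactly `2·n!` models: the number of triples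
`(≤, σ, c)` on an `n`-element set (`n ≥ 4`), where `≤` is a linear order (with strict part
`lt`), `c` is a 2-coloring in which `≤`-consecutive elements get different colors, and `σ` is
a fixed-point-free permutation preserving the coloring, with exactly two descents `σ x < x`,
admitting a sub-relation of size `n - 2` contained in `{(x, σ x) : x < σ x}`, is `2 · n!`. -/
theorem stmt19 (n : ℕ) (hn : 4 ≤ n) :
    Nat.card {t : (Fin n → Fin n → Prop) × Equiv.Perm (Fin n) × (Fin n → Bool) //
      IsLinearOrder (Fin n) t.1 ∧
      -- consecutive elements of the order get different colors
      (∀ x y : Fin n,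
        ((t.1 x y ∧ x ≠ y) ∧ ∀ z, ¬ ((t.1 x z ∧ x ≠ z) ∧ (t.1 z y ∧ z ≠ y))) →
        t.2.2 x ≠ t.2.2 y) ∧
      (∀ x, t.2.1 x ≠ x) ∧
      (∀ x, t.2.2 (t.2.1 x) = t.2.2 x) ∧
      Nat.card {x : Fin n // t.1 (t.2.1 x) x ∧ t.2.1 x ≠ x} = 2 ∧
      n - 2 ≤ Nat.card {x : Fin n // t.1 x (t.2.1 x) ∧ x ≠ t.2.1 x}} =
    2 * Nat.factorial n := by
  change Nat.card {t : Pred2.Interp (Fin n) Bool // Pred2.IsModel (n - 2) t} = _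
  rw [Pred2.card_isModel, Pred2.card_isModel_le hn, mul_comm]
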